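/- The additive subgroup Λ of ℝ³ generated by λ1, λ2, λ3 equals the body-centered cubic lattice {√2·(a,b,c) : a,b,c ∈ ℤ, a ≡ b (mod 2) and b ≡ c (mod 2)}. -/

import Mathlib

/-!
Every generator has coordinates of equal parity, so Λ lies in the body-centered cubic lattice.
Conversely, if `a, b, c` have equal parity then the half-sums `k₁ = (b + c)/2`, `k₂ = (a + c)/2`,
`k₃ = (a + b)/2` are integers and `√2 • (a, b, c) = -(k₁ λ₁ + k₂ λ₂ + k₃ λ₃)`.
The factor `√2` plays no role: the argument takes place in `ℤ³` and is pushed forward along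
`v ↦ √2 • v`.
-/

noncomputable section

def lam1 : Fin 3 → ℝ := Real.sqrt 2 • ![1, -1, -1]
def lam2 : Fin 3 → ℝ := Real.sqrt 2 • ![-1, 1, -1]
def lam3 : Fin 3 → ℝ := Real.sqrt 2 • ![-1, -1, 1]

/-- The additive subgroup Λ of ℝ³ generated by λ1, λ2, λ3. -/
def Lambda : AddSubgroup (Fin 3 → ℝ) := AddSubgroup.closure {lam1, lam2, lam3}

def bccGenerators : Set (Fin 3 → ℤ) := {![1, -1, -1], ![-1, 1, -1], ![-1, -1, 1]}

def bccLattice : AddSubgroup (Fin 3 → ℤ) where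
  carrier := {v | v 0 ≡ v 1 [ZMOD 2] ∧ v 1 ≡ v 2 [ZMOD 2]}
  zero_mem' := ⟨rfl, rfl⟩
  add_mem' hv hw := ⟨hv.1.add hw.1, hv.2.add hw.2⟩
  neg_mem' hv := ⟨hv.1.neg, hv.2.neg⟩

lemma mem_bccLattice {v : Fin 3 → ℤ} :
    v ∈ bccLattice ↔ v 0 ≡ v 1 [ZMOD 2] ∧ v 1 ≡ v 2 [ZMOD 2] :=
  Iff.rfl

lemma closure_bccGenerators_le : AddSubgroup.closure bccGenerators ≤ bccLattice := by
  rw [AddSubgroup.closure_le]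
  rintro v (rfl | rfl | rfl) <;> exact mem_bccLattice.2 ⟨by decide, by decide⟩

lemma bccLattice_le_closure_bccGenerators : bccLattice ≤ AddSubgroup.closure bccGenerators := by
  intro v ⟨hab, hbc⟩
  obtain ⟨k₁, hk₁⟩ : (2 : ℤ) ∣ v 1 + v 2 := by have := hbc.dvd; omega
  obtain ⟨k₂, hk₂⟩ : (2 : ℤ) ∣ v 0 + v 2 := by have := (hab.trans hbc).dvd; omega
  obtain ⟨k₃, hk₃⟩ : (2 : ℤ) ∣ v 0 + v 1 := by have := hab.dvd; omega
  have hv : v = (-k₁) • ![1, -1, -1] + (-k₂) • ![-1, 1, -1] + (-k₃) • ![-1, -1, 1] := by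
    ext i; fin_cases i <;> simp <;> omega
  rw [hv]
  refine add_mem (add_mem ?_ ?_) ?_ <;>
    exact zsmul_mem (AddSubgroup.subset_closure (by simp [bccGenerators])) _

theorem closure_bccGenerators : AddSubgroup.closure bccGenerators = bccLattice :=
  le_antisymm closure_bccGenerators_le bccLattice_le_closure_bccGenerators

section

variable {R : Type*} [Ring R]

def smulIntCast (ι : Type*) (r : R) : (ι → ℤ) →+ (ι → R) :=
  (DistribSMul.toAddMonoidHom (ι → R) r).comp (AddMonoidHom.compLeft (Int.castAddHom R) ι)

@[simp]
lemma smulIntCast_apply {ι : Type*} (r : R) (v : ι → ℤ) (i : ι) :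
    smulIntCast ι r v i = r * v i :=
  rfl

lemma coe_map_smulIntCast_bccLattice (r : R) :
    (bccLattice.map (smulIntCast (Fin 3) r) : Set (Fin 3 → R)) =
      {x | ∃ a b c : ℤ, a ≡ b [ZMOD 2] ∧ b ≡ c [ZMOD 2] ∧ x = r • ![(a : R), (b : R), (c : R)]} := by
  ext x
  constructor
  · rintro ⟨v, ⟨hab, hbc⟩, rfl⟩
    exact ⟨v 0, v 1, v 2, hab, hbc, by ext i; fin_cases i <;> simp⟩
  · rintro ⟨a, b, c, hab, hbc, rfl⟩
    exact ⟨![a, b, c], ⟨hab, hbc⟩, by ext i; fin_cases i <;> simp⟩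

end

/-- Λ equals the body-centered cubic lattice
`{√2·(a,b,c) : a,b,c ∈ ℤ, a ≡ b (mod 2), b ≡ c (mod 2)}`. -/
theorem lattice_eq_bcc :
    (Lambda : Set (Fin 3 → ℝ)) =
      {x | ∃ a b c : ℤ, a ≡ b [ZMOD 2] ∧ b ≡ c [ZMOD 2] ∧
        x = Real.sqrt 2 • ![(a : ℝ), (b : ℝ), (c : ℝ)]} := by
  have generators : smulIntCast (Fin 3) (Real.sqrt 2) '' bccGenerators = {lam1, lam2, lam3} := by
    have h₁ : smulIntCast (Fin 3) (Real.sqrt 2) ![1, -1, -1] = lam1 := by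
      ext i; fin_cases i <;> simp [lam1]
    have h₂ : smulIntCast (Fin 3) (Real.sqrt 2) ![-1, 1, -1] = lam2 := by
      ext i; fin_cases i <;> simp [lam2]
    have h₃ : smulIntCast (Fin 3) (Real.sqrt 2) ![-1, -1, 1] = lam3 := by
      ext i; fin_cases i <;> simp [lam3]
    simp only [bccGenerators, Set.image_insert_eq, Set.image_singleton, h₁, h₂, h₃]
  rw [← coe_map_smulIntCast_bccLattice, ← closure_bccGenerators, AddMonoidHom.map_closure,
    generators]
  rfl

end
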